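/- Let u_T : ℝⁿ → ℝ be Lipschitz and set u_T^* := S_T^+(S_T^- u_T). Then u_T^* is the smallest reachable target bounded from below by u_T: (a) S_T^+(S_T^- u_T^*) = u_T^* (u_T^* is reachable) and u_T^*(x) ≥ u_T(x) for all x ∈ ℝⁿ; (b) for every Lipschitz function v : ℝⁿ → ℝ with S_T^+(S_T^- v) = v and v(x) ≥ u_T(x) for all x ∈ ℝⁿ, one has v(x) ≥ u_T^*(x) for all x ∈ ℝⁿ. -/

import Mathlib

/-!
A superlinear `H` makes its Legendre transform `L` finite and superlinear, so the cost
`T·L((x - y)/T)` beats every linear function of `‖x - y‖`. Hence on Lipschitz functions both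
Hopf–Lax operators are finite, monotone and preserve the Lipschitz constant, and they form a
Galois connection: `g ≤ S⁺(S⁻ g)` and `S⁻(S⁺ g) ≤ g`. The composite `S⁺ ∘ S⁻` is therefore a
closure operator, and `S⁺(S⁻ u)` is the least closed (reachable) function above `u`.
-/

open scoped RealInnerProductSpace
open Filter

noncomputable section

/-- `n`-dimensional Euclidean space. -/
abbrev Euc (n : ℕ) := EuclideanSpace ℝ (Fin n)

/-- A real-valued function on `ℝⁿ` is Lipschitz (with some constant). -/
def IsLip {n : ℕ} (f : Euc n → ℝ) : Prop := ∃ K : NNReal, LipschitzWith K f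

/-- The Legendre transform `L(q) = sup_p (⟨q,p⟫ - H(p))`. -/
def legendre {n : ℕ} (H : Euc n → ℝ) (q : Euc n) : ℝ :=
  ⨆ p : Euc n, (⟪q, p⟫ - H p)

/-- The forward Hopf–Lax operator `(S_T^+ g)(x) = inf_y [g(y) + T·L((x-y)/T)]`. -/
def Splus {n : ℕ} (T : ℝ) (L : Euc n → ℝ) (g : Euc n → ℝ) (x : Euc n) : ℝ :=
  ⨅ y : Euc n, (g y + T * L (T⁻¹ • (x - y)))

/-- The backward operator `(S_T^- g)(x) = sup_y [g(y) - T·L((y-x)/T)]`. -/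
def Sminus {n : ℕ} (T : ℝ) (L : Euc n → ℝ) (g : Euc n → ℝ) (x : Euc n) : ℝ :=
  ⨆ y : Euc n, (g y - T * L (T⁻¹ • (y - x)))

/-- The Hessian of `H` is positive definite at every point. -/
def PosDefHessian {n : ℕ} (H : Euc n → ℝ) : Prop :=
  ∀ p v : Euc n, v ≠ 0 → 0 < iteratedFDeriv ℝ 2 H p ![v, v]

/-- `H` is superlinear: `H(p)/‖p‖ → +∞` as `‖p‖ → +∞`. -/
def Superlinear {n : ℕ} (H : Euc n → ℝ) : Prop :=
  Tendsto (fun p : Euc n => H p / ‖p‖) (cocompact (Euc n)) atTop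

open scoped NNReal
open Set

def GrowsSuperlinearly {E : Type*} [Norm E] (L : E → ℝ) : Prop :=
  ∀ K : ℝ, ∃ C : ℝ, ∀ q, K * ‖q‖ - C ≤ L q

theorem Superlinear.growsSuperlinearly {n : ℕ} {H : Euc n → ℝ} (hc : Continuous H)
    (hs : Superlinear H) : GrowsSuperlinearly H := by
  intro M
  obtain ⟨S, hS, hSc⟩ := mem_cocompact.mp (hs.eventually_ge_atTop M)
  have hcont : Continuous fun p => M * ‖p‖ - H p := by fun_prop
  obtain ⟨C, hC⟩ := ((hS.insert 0).image hcont).bddAbove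
  refine ⟨max C 0, fun p => ?_⟩
  by_cases hp : p ∈ insert 0 S
  · have : M * ‖p‖ - H p ≤ C := hC (mem_image_of_mem _ hp)
    linarith [le_max_left C 0]
  · have hp0 : 0 < ‖p‖ := norm_pos_iff.mpr fun h => hp (h ▸ mem_insert 0 S)
    have := (le_div_iff₀ hp0).mp (hSc fun h => hp (mem_insert_of_mem 0 h))
    linarith [le_max_right C 0]

theorem GrowsSuperlinearly.bddAbove_inner_sub {n : ℕ} {H : Euc n → ℝ}
    (hH : GrowsSuperlinearly H) (q : Euc n) : BddAbove (range fun p => ⟪q, p⟫ - H p) := by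
  obtain ⟨C, hC⟩ := hH ‖q‖
  refine ⟨C, ?_⟩
  rintro _ ⟨p, rfl⟩
  linarith [real_inner_le_norm q p, hC p]

theorem GrowsSuperlinearly.legendre {n : ℕ} {H : Euc n → ℝ} (hc : Continuous H)
    (hH : GrowsSuperlinearly H) : GrowsSuperlinearly (legendre H) := by
  intro M
  set R := max M 0
  obtain ⟨C, hC⟩ := ((isCompact_closedBall (0 : Euc n) R).image hc).bddAbove
  refine ⟨C, fun q => ?_⟩
  -- test the supremum defining `legendre H q` at the point of norm `R` in the direction of `q`
  have key : ∃ p : Euc n, ‖p‖ ≤ R ∧ M * ‖q‖ ≤ ⟪q, p⟫ := by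
    rcases eq_or_ne q 0 with rfl | hq
    · exact ⟨0, by simp [R], by simp⟩
    · have hq' : 0 < ‖q‖ := norm_pos_iff.mpr hq
      refine ⟨(R / ‖q‖) • q, ?_, ?_⟩
      · rw [norm_smul, Real.norm_of_nonneg (by positivity), div_mul_cancel₀ _ hq'.ne']
      · rw [real_inner_smul_right, real_inner_self_eq_norm_mul_norm, ← mul_assoc,
          div_mul_cancel₀ _ hq'.ne']
        exact mul_le_mul_of_nonneg_right (le_max_left M 0) (norm_nonneg q)
  obtain ⟨p, hpR, hMp⟩ := key
  have hHp : H p ≤ C := hC (mem_image_of_mem H (mem_closedBall_zero_iff.mpr hpR))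
  have hLp : ⟪q, p⟫ - H p ≤ _root_.legendre H q := le_ciSup (hH.bddAbove_inner_sub q) p
  linarith

theorem GrowsSuperlinearly.perspective {E : Type*} [SeminormedAddCommGroup E]
    [NormedSpace ℝ E] {L : E → ℝ} (hL : GrowsSuperlinearly L) {T : ℝ} (hT : 0 < T) :
    GrowsSuperlinearly fun z => T * L (T⁻¹ • z) := by
  intro K
  obtain ⟨C, hC⟩ := hL K
  refine ⟨T * C, fun z => ?_⟩
  have h := mul_le_mul_of_nonneg_left (hC (T⁻¹ • z)) hT.le
  rw [norm_smul, Real.norm_of_nonneg (inv_nonneg.mpr hT.le)] at h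
  calc K * ‖z‖ - T * C = T * (K * (T⁻¹ * ‖z‖) - C) := by field_simp
    _ ≤ T * L (T⁻¹ • z) := h

section HopfLax

variable {n : ℕ} {T : ℝ} {L : Euc n → ℝ}
  (hk : GrowsSuperlinearly fun z : Euc n => T * L (T⁻¹ • z)) {g g' : Euc n → ℝ} {K K' : ℝ≥0}

include hk

theorem bddAbove_sminus (hg : LipschitzWith K g) (x : Euc n) :
    BddAbove (range fun y => g y - T * L (T⁻¹ • (y - x))) := by
  obtain ⟨C, hC⟩ := hk K
  refine ⟨g x + C, ?_⟩
  rintro _ ⟨y, rfl⟩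
  have := hg.le_add_mul y x
  rw [dist_eq_norm] at this
  linarith [hC (y - x)]

theorem bddBelow_splus (hg : LipschitzWith K g) (x : Euc n) :
    BddBelow (range fun y => g y + T * L (T⁻¹ • (x - y))) := by
  obtain ⟨C, hC⟩ := hk K
  refine ⟨g x - C, ?_⟩
  rintro _ ⟨y, rfl⟩
  have := hg.le_add_mul x y
  rw [dist_eq_norm] at this
  linarith [hC (x - y)]

theorem le_splus_sminus (hg : LipschitzWith K g) : g ≤ Splus T L (Sminus T L g) := fun x =>
  le_ciInf fun y => by
    have : g x - T * L (T⁻¹ • (x - y)) ≤ Sminus T L g y :=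
      le_ciSup (bddAbove_sminus hk hg y) x
    linarith

theorem sminus_splus_le (hg : LipschitzWith K g) : Sminus T L (Splus T L g) ≤ g := fun x =>
  ciSup_le fun y => by
    have : Splus T L g y ≤ g x + T * L (T⁻¹ • (y - x)) :=
      ciInf_le (bddBelow_splus hk hg y) x
    linarith

theorem sminus_mono (hg' : LipschitzWith K g') (h : g ≤ g') :
    Sminus T L g ≤ Sminus T L g' := fun x =>
  ciSup_le fun y => (sub_le_sub_right (h y) _).trans (le_ciSup (bddAbove_sminus hk hg' x) y)

theorem splus_mono (hg : LipschitzWith K g) (h : g ≤ g') :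
    Splus T L g ≤ Splus T L g' := fun x =>
  le_ciInf fun y => (ciInf_le (bddBelow_splus hk hg x) y).trans (add_le_add_left (h y) _)

-- Both operators commute with translations, so each competitor `y` for `x₁` is matched by the
-- translated competitor `y + (x₂ - x₁)` for `x₂`.
theorem LipschitzWith.sminus (hg : LipschitzWith K g) : LipschitzWith K (Sminus T L g) := by
  refine LipschitzWith.of_le_add_mul K fun x₁ x₂ => ?_
  have hbound : ∀ y, g y - T * L (T⁻¹ • (y - x₁)) ≤ Sminus T L g x₂ + K * dist x₁ x₂ := by
    intro y
    have hgy := hg.le_add_mul y (y + (x₂ - x₁))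
    have hsup : g (y + (x₂ - x₁)) - T * L (T⁻¹ • (y + (x₂ - x₁) - x₂)) ≤ Sminus T L g x₂ :=
      le_ciSup (bddAbove_sminus hk hg x₂) _
    rw [show y + (x₂ - x₁) - x₂ = y - x₁ by abel] at hsup
    rw [dist_eq_norm, show y - (y + (x₂ - x₁)) = x₁ - x₂ by abel, ← dist_eq_norm] at hgy
    linarith
  exact ciSup_le hbound

theorem LipschitzWith.splus (hg : LipschitzWith K g) : LipschitzWith K (Splus T L g) := by
  refine LipschitzWith.of_le_add_mul K fun x₁ x₂ => ?_
  have hbound : ∀ y, Splus T L g x₁ - K * dist x₁ x₂ ≤ g y + T * L (T⁻¹ • (x₂ - y)) := by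
    intro y
    have hgy := hg.le_add_mul (y + (x₁ - x₂)) y
    have hinf : Splus T L g x₁ ≤ g (y + (x₁ - x₂)) + T * L (T⁻¹ • (x₁ - (y + (x₁ - x₂)))) :=
      ciInf_le (bddBelow_splus hk hg x₁) _
    rw [show x₁ - (y + (x₁ - x₂)) = x₂ - y by abel] at hinf
    rw [dist_eq_norm, show y + (x₁ - x₂) - y = x₁ - x₂ by abel, ← dist_eq_norm] at hgy
    linarith
  have : Splus T L g x₁ - K * dist x₁ x₂ ≤ Splus T L g x₂ := le_ciInf hbound
  linarith

theorem splus_sminus_idem (hg : LipschitzWith K g) :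
    Splus T L (Sminus T L (Splus T L (Sminus T L g))) = Splus T L (Sminus T L g) := by
  have hg₁ := (hg.sminus hk).splus hk
  refine le_antisymm ?_ (le_splus_sminus hk hg₁)
  exact splus_mono hk (hg₁.sminus hk) (sminus_splus_le hk (hg.sminus hk))

theorem splus_sminus_le_of_splus_sminus_eq (hg : LipschitzWith K g) (hg' : LipschitzWith K' g')
    (hfix : Splus T L (Sminus T L g') = g') (h : g ≤ g') : Splus T L (Sminus T L g) ≤ g' :=
  hfix ▸ splus_mono hk (hg.sminus hk) (sminus_mono hk hg' h)

end HopfLax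

theorem semiconcave_envelope_smallest_reachable_general
    {n : ℕ} (T : ℝ) (hT : 0 < T)
    (H : Euc n → ℝ) (hH : ContDiff ℝ 2 H)
    (hHsuper : Superlinear H)
    (uT : Euc n → ℝ) (huT : IsLip uT) :
    (Splus T (legendre H) (Sminus T (legendre H)
          (Splus T (legendre H) (Sminus T (legendre H) uT))) =
        Splus T (legendre H) (Sminus T (legendre H) uT) ∧
      ∀ x : Euc n, uT x ≤ Splus T (legendre H) (Sminus T (legendre H) uT) x) ∧
    ∀ v : Euc n → ℝ, IsLip v →
      Splus T (legendre H) (Sminus T (legendre H) v) = v →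
      (∀ x : Euc n, uT x ≤ v x) →
      ∀ x : Euc n, Splus T (legendre H) (Sminus T (legendre H) uT) x ≤ v x := by
  have hk := ((hHsuper.growsSuperlinearly hH.continuous).legendre hH.continuous).perspective hT
  obtain ⟨K, hu⟩ := huT
  refine ⟨⟨splus_sminus_idem hk hu, le_splus_sminus hk hu⟩, ?_⟩
  rintro v ⟨K', hv⟩ hfix hle
  exact splus_sminus_le_of_splus_sminus_eq hk hu hv hfix hle

/-- `u_T^* := S_T^+(S_T^- u_T)` is the smallest reachable target bounded
from below by `u_T`: it is reachable, dominates `u_T`, and any reachable Lipschitz target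
dominating `u_T` dominates `u_T^*`. -/
theorem semiconcave_envelope_smallest_reachable
    {n : ℕ} (hn : 0 < n) (T : ℝ) (hT : 0 < T)
    (H : Euc n → ℝ) (hH : ContDiff ℝ 2 H)
    (hHconv : PosDefHessian H) (hHsuper : Superlinear H)
    (uT : Euc n → ℝ) (huT : IsLip uT) :
    (Splus T (legendre H) (Sminus T (legendre H)
          (Splus T (legendre H) (Sminus T (legendre H) uT))) =
        Splus T (legendre H) (Sminus T (legendre H) uT) ∧
      ∀ x : Euc n, uT x ≤ Splus T (legendre H) (Sminus T (legendre H) uT) x) ∧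
    ∀ v : Euc n → ℝ, IsLip v →
      Splus T (legendre H) (Sminus T (legendre H) v) = v →
      (∀ x : Euc n, uT x ≤ v x) →
      ∀ x : Euc n, Splus T (legendre H) (Sminus T (legendre H) uT) x ≤ v x :=
  semiconcave_envelope_smallest_reachable_general T hT H hH hHsuper uT huT
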